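/- Let M ∈ 𝒞_H(α,β), N ∈ 𝒞_H(γ,δ), P ∈ 𝒞_H(μ,ν). Then the hexagon identity c_{M⊗N,P} = (c_{M,ᴺP} ⊗ id_N) ∘ (id_M ⊗ c_{N,P}) holds, where c_{X,Y}(x ⊗ y) = y₍₀₎ ⊗ βₓ⁻¹(y₍₁₎)·x with βₓ the second automorphism attached to X. -/
import Mathlib


open TensorProduct

/-- The data of a Hopf quasigroup without its antipode: a unital (possibly nonassociative)
algebra together with a coassociative counital comultiplication which, together with the
counit, is an algebra homomorphism. Everything is expressed in terms of linear maps, so that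
Sweedler-notation identities become equalities of composites of linear maps. -/
structure HopfQuasigroupData (k H : Type*) [Field k] [AddCommGroup H] [Module k H] where
  mul : H ⊗[k] H →ₗ[k] H
  one : H
  comul : H →ₗ[k] H ⊗[k] H
  counit : H →ₗ[k] k
  one_mul : ∀ x : H, mul (one ⊗ₜ[k] x) = x
  mul_one : ∀ x : H, mul (x ⊗ₜ[k] one) = x
  coassoc : (TensorProduct.assoc k H H H).toLinearMap ∘ₗ comul.rTensor H ∘ₗ comul =
    comul.lTensor H ∘ₗ comul
  counit_comul : (TensorProduct.lid k H).toLinearMap ∘ₗ counit.rTensor H ∘ₗ comul =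
    LinearMap.id
  comul_counit : (TensorProduct.rid k H).toLinearMap ∘ₗ counit.lTensor H ∘ₗ comul =
    LinearMap.id
  comul_mul : comul ∘ₗ mul = TensorProduct.map mul mul ∘ₗ
    (TensorProduct.tensorTensorTensorComm k H H H H).toLinearMap ∘ₗ
      TensorProduct.map comul comul
  comul_one : comul one = one ⊗ₜ[k] one
  counit_mul : ∀ x y : H, counit (mul (x ⊗ₜ[k] y)) = counit x * counit y
  counit_one : counit one = 1

namespace HopfQuasigroupData

variable {k H : Type*} [Field k] [AddCommGroup H] [Module k H]

/-- The linear map `h ⊗ g ↦ ε(h)g`. -/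
noncomputable def εl (D : HopfQuasigroupData k H) : H ⊗[k] H →ₗ[k] H :=
  (TensorProduct.lid k H).toLinearMap ∘ₗ D.counit.rTensor H

/-- The linear map `g ⊗ h ↦ ε(h)g`. -/
noncomputable def εr (D : HopfQuasigroupData k H) : H ⊗[k] H →ₗ[k] H :=
  (TensorProduct.rid k H).toLinearMap ∘ₗ D.counit.lTensor H

/-- `S` is an antipode for the Hopf quasigroup data `D`. -/
def IsAntipode (D : HopfQuasigroupData k H) (S : H →ₗ[k] H) : Prop :=
  (D.mul ∘ₗ TensorProduct.map S D.mul ∘ₗ (TensorProduct.assoc k H H H).toLinearMap ∘ₗ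
      D.comul.rTensor H = D.εl) ∧
  (D.mul ∘ₗ TensorProduct.map LinearMap.id (D.mul ∘ₗ S.rTensor H) ∘ₗ
      (TensorProduct.assoc k H H H).toLinearMap ∘ₗ D.comul.rTensor H = D.εl) ∧
  (D.mul ∘ₗ TensorProduct.map (D.mul ∘ₗ S.lTensor H) LinearMap.id ∘ₗ
      (TensorProduct.assoc k H H H).symm.toLinearMap ∘ₗ D.comul.lTensor H = D.εr) ∧
  (D.mul ∘ₗ TensorProduct.map D.mul S ∘ₗ
      (TensorProduct.assoc k H H H).symm.toLinearMap ∘ₗ D.comul.lTensor H = D.εr)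

end HopfQuasigroupData

/-- An automorphism of a Hopf quasigroup `(D, S)`: a linear automorphism which is an algebra
and coalgebra morphism and commutes with the antipode. -/
structure HopfQuasigroupAut {k H : Type*} [Field k] [AddCommGroup H] [Module k H]
    (D : HopfQuasigroupData k H) (S : H →ₗ[k] H) where
  toLinearEquiv : H ≃ₗ[k] H
  map_mul : toLinearEquiv.toLinearMap ∘ₗ D.mul =
    D.mul ∘ₗ TensorProduct.map toLinearEquiv.toLinearMap toLinearEquiv.toLinearMap
  map_one : toLinearEquiv D.one = D.one
  map_comul : D.comul ∘ₗ toLinearEquiv.toLinearMap =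
    TensorProduct.map toLinearEquiv.toLinearMap toLinearEquiv.toLinearMap ∘ₗ D.comul
  map_counit : D.counit ∘ₗ toLinearEquiv.toLinearMap = D.counit
  comm_antipode : toLinearEquiv.toLinearMap ∘ₗ S = S ∘ₗ toLinearEquiv.toLinearMap

namespace HopfQuasigroupAut

variable {k H : Type*} [Field k] [AddCommGroup H] [Module k H]
  {D : HopfQuasigroupData k H} {S : H →ₗ[k] H}

/-- The underlying linear map of a Hopf quasigroup automorphism. -/
def lmap (α : HopfQuasigroupAut D S) : H →ₗ[k] H := α.toLinearEquiv.toLinearMap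

/-- The underlying linear map of the inverse of a Hopf quasigroup automorphism. -/
def invmap (α : HopfQuasigroupAut D S) : H →ₗ[k] H := α.toLinearEquiv.symm.toLinearMap

end HopfQuasigroupAut

section Quasimodules

variable {k H M : Type*} [Field k] [AddCommGroup H] [Module k H]
  [AddCommGroup M] [Module k M]

/-- The linear map `h ⊗ m ↦ ε(h)m`. -/
noncomputable def εAct (D : HopfQuasigroupData k H) (M : Type*) [AddCommGroup M]
    [Module k M] : H ⊗[k] M →ₗ[k] M :=
  (TensorProduct.lid k M).toLinearMap ∘ₗ D.counit.rTensor M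

/-- `act` makes `M` a left quasimodule over the Hopf quasigroup `(D, S)`:
`1·m = m` and `Σ h₁·(S(h₂)·m) = Σ S(h₁)·(h₂·m) = ε(h)m`. -/
def IsQuasimodule (D : HopfQuasigroupData k H) (S : H →ₗ[k] H)
    (act : H ⊗[k] M →ₗ[k] M) : Prop :=
  (∀ m : M, act (D.one ⊗ₜ[k] m) = m) ∧
  (act ∘ₗ (act ∘ₗ S.rTensor M).lTensor H ∘ₗ (TensorProduct.assoc k H H M).toLinearMap ∘ₗ
      D.comul.rTensor M = εAct D M) ∧
  (act ∘ₗ S.rTensor M ∘ₗ act.lTensor H ∘ₗ (TensorProduct.assoc k H H M).toLinearMap ∘ₗ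
      D.comul.rTensor M = εAct D M)

/-- `coact` makes `M` a (counital, coassociative) right comodule over `D`. -/
def IsComodule (D : HopfQuasigroupData k H) (coact : M →ₗ[k] M ⊗[k] H) : Prop :=
  ((TensorProduct.rid k M).toLinearMap ∘ₗ D.counit.lTensor M ∘ₗ coact = LinearMap.id) ∧
  (coact.rTensor H ∘ₗ coact =
    (TensorProduct.assoc k M H H).symm.toLinearMap ∘ₗ D.comul.lTensor M ∘ₗ coact)

/-- The shuffle `(h₁ ⊗ (h₂₁ ⊗ h₂₂)) ⊗ (m₀ ⊗ m₁) ↦ (h₂₁ ⊗ m₀) ⊗ ((h₂₂ ⊗ m₁) ⊗ h₁)`. -/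
noncomputable def ydShuffle (k H M : Type*) [Field k] [AddCommGroup H] [Module k H]
    [AddCommGroup M] [Module k M] :
    (H ⊗[k] (H ⊗[k] H)) ⊗[k] (M ⊗[k] H) →ₗ[k] (H ⊗[k] M) ⊗[k] ((H ⊗[k] H) ⊗[k] H) :=
  (TensorProduct.assoc k (H ⊗[k] M) (H ⊗[k] H) H).toLinearMap ∘ₗ
    (TensorProduct.comm k H ((H ⊗[k] M) ⊗[k] (H ⊗[k] H))).toLinearMap ∘ₗ
      ((TensorProduct.tensorTensorTensorComm k H H M H).toLinearMap.lTensor H) ∘ₗ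
        (TensorProduct.assoc k H (H ⊗[k] H) (M ⊗[k] H)).toLinearMap

/-- The `(α,β)`-Yetter–Drinfeld quasimodule compatibility condition (Eq. (5.1)):
`ρ(h·m) = Σ h₂₁·m₀ ⊗ (β(h₂₂)m₁)α(S⁻¹(h₁))`. -/
noncomputable def YDCompat (D : HopfQuasigroupData k H) (Sinv : H →ₗ[k] H)
    (α β : H →ₗ[k] H) (act : H ⊗[k] M →ₗ[k] M) (coact : M →ₗ[k] M ⊗[k] H) : Prop :=
  coact ∘ₗ act =
    TensorProduct.map act
        (D.mul ∘ₗ TensorProduct.map (D.mul ∘ₗ β.rTensor H) (α ∘ₗ Sinv)) ∘ₗ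
      ydShuffle k H M ∘ₗ coact.lTensor (H ⊗[k] (H ⊗[k] H)) ∘ₗ
        (D.comul.lTensor H).rTensor M ∘ₗ D.comul.rTensor M

end Quasimodules

section Braiding

variable (k : Type*) {H : Type*} (M N : Type*) [Field k] [AddCommGroup H] [Module k H]
  [AddCommGroup M] [Module k M] [AddCommGroup N] [Module k N]

/-- The braiding `c_{M,N}(m ⊗ n) = n₀ ⊗ β⁻¹(n₁)·m` (for `M ∈ 𝒞_H(α,β)`). -/
noncomputable def braiding (βinv : H →ₗ[k] H) (actM : H ⊗[k] M →ₗ[k] M)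
    (coactN : N →ₗ[k] N ⊗[k] H) : M ⊗[k] N →ₗ[k] N ⊗[k] M :=
  (actM ∘ₗ βinv.rTensor M).lTensor N ∘ₗ (TensorProduct.assoc k N H M).toLinearMap ∘ₗ
    coactN.rTensor M ∘ₗ (TensorProduct.comm k M N).toLinearMap

/-- The inverse braiding `c⁻¹(n ⊗ m) = β⁻¹(S(n₁))·m ⊗ n₀`. -/
noncomputable def braidingInv (βinv S : H →ₗ[k] H) (actM : H ⊗[k] M →ₗ[k] M)
    (coactN : N →ₗ[k] N ⊗[k] H) : N ⊗[k] M →ₗ[k] M ⊗[k] N :=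
  TensorProduct.map (actM ∘ₗ (βinv ∘ₗ S).rTensor M) LinearMap.id ∘ₗ
    (TensorProduct.comm k N (H ⊗[k] M)).toLinearMap ∘ₗ
      (TensorProduct.assoc k N H M).toLinearMap ∘ₗ coactN.rTensor M

end Braiding

section Statement17

variable {k H M N P : Type*} [Field k] [AddCommGroup H] [Module k H]
  [AddCommGroup M] [Module k M] [AddCommGroup N] [Module k N] [AddCommGroup P] [Module k P]

/-- The action of `H` on `M ⊗ N`: `h·(m ⊗ n) = γ(h₁)·m ⊗ γ⁻¹βγ(h₂)·n`. -/
noncomputable def tensorAct (D : HopfQuasigroupData k H) (β γ γinv : H →ₗ[k] H)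
    (actM : H ⊗[k] M →ₗ[k] M) (actN : H ⊗[k] N →ₗ[k] N) :
    H ⊗[k] (M ⊗[k] N) →ₗ[k] M ⊗[k] N :=
  TensorProduct.map (actM ∘ₗ γ.rTensor M) (actN ∘ₗ (γinv ∘ₗ β ∘ₗ γ).rTensor N) ∘ₗ
    (TensorProduct.tensorTensorTensorComm k H H M N).toLinearMap ∘ₗ
      D.comul.rTensor (M ⊗[k] N)

/-- The common "middle" map `(p ⊗ (a ⊗ b)) ⊗ (m ⊗ n) ↦ p ⊗ (g(a)·m ⊗ dinv(b)·n)`. -/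
noncomputable def myOmega (g dinv : H →ₗ[k] H) (actM : H ⊗[k] M →ₗ[k] M)
    (actN : H ⊗[k] N →ₗ[k] N) :
    (P ⊗[k] (H ⊗[k] H)) ⊗[k] (M ⊗[k] N) →ₗ[k] P ⊗[k] (M ⊗[k] N) :=
  (TensorProduct.map (actM ∘ₗ g.rTensor M) (actN ∘ₗ dinv.rTensor N)).lTensor P ∘ₗ
    ((TensorProduct.tensorTensorTensorComm k H H M N).toLinearMap).lTensor P ∘ₗ
      (TensorProduct.assoc k P (H ⊗[k] H) (M ⊗[k] N)).toLinearMap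

@[simp] lemma myOmega_tmul (g dinv : H →ₗ[k] H) (actM : H ⊗[k] M →ₗ[k] M)
    (actN : H ⊗[k] N →ₗ[k] N) (p : P) (a b : H) (m : M) (n : N) :
    myOmega g dinv actM actN ((p ⊗ₜ[k] (a ⊗ₜ[k] b)) ⊗ₜ[k] (m ⊗ₜ[k] n)) =
      p ⊗ₜ[k] (actM (g a ⊗ₜ[k] m) ⊗ₜ[k] actN (dinv b ⊗ₜ[k] n)) := by
  simp [myOmega]

lemma comul_lmap_apply {D : HopfQuasigroupData k H} {S : H →ₗ[k] H}
    (α : HopfQuasigroupAut D S) (x : H) :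
    D.comul (α.lmap x) = TensorProduct.map α.lmap α.lmap (D.comul x) :=
  LinearMap.congr_fun α.map_comul x

lemma invmap_lmap (α : HopfQuasigroupAut (k := k) (H := H) D S) :
    α.invmap ∘ₗ α.lmap = LinearMap.id := by
  ext x
  simp [HopfQuasigroupAut.invmap, HopfQuasigroupAut.lmap]

lemma comul_invmap_apply {D : HopfQuasigroupData k H} {S : H →ₗ[k] H}
    (α : HopfQuasigroupAut D S) (x : H) :
    D.comul (α.invmap x) = TensorProduct.map α.invmap α.invmap (D.comul x) := by
  have hcomp : TensorProduct.map α.invmap α.invmap ∘ₗ TensorProduct.map α.lmap α.lmap =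
      LinearMap.id := by
    rw [← TensorProduct.map_comp, invmap_lmap, TensorProduct.map_id]
  have h2 : TensorProduct.map α.invmap α.invmap
      (TensorProduct.map α.lmap α.lmap (D.comul (α.invmap x))) = D.comul (α.invmap x) := by
    rw [← LinearMap.comp_apply, hcomp, LinearMap.id_apply]
  have h3 : α.lmap (α.invmap x) = x := by
    simp [HopfQuasigroupAut.invmap, HopfQuasigroupAut.lmap]
  calc D.comul (α.invmap x)
      = TensorProduct.map α.invmap α.invmap
          (TensorProduct.map α.lmap α.lmap (D.comul (α.invmap x))) := h2.symm
    _ = TensorProduct.map α.invmap α.invmap (D.comul (α.lmap (α.invmap x))) := by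
        rw [comul_lmap_apply]
    _ = TensorProduct.map α.invmap α.invmap (D.comul x) := by rw [h3]

lemma claimA {D : HopfQuasigroupData k H} {S : H →ₗ[k] H}
    (β γ δ : HopfQuasigroupAut D S)
    (actM : H ⊗[k] M →ₗ[k] M) (actN : H ⊗[k] N →ₗ[k] N) (coactP : P →ₗ[k] P ⊗[k] H) :
    braiding k (M ⊗[k] N) P (γ.invmap ∘ₗ β.invmap ∘ₗ γ.lmap ∘ₗ δ.invmap)
        (tensorAct D β.lmap γ.lmap γ.invmap actM actN) coactP =
      myOmega (β.invmap ∘ₗ γ.lmap ∘ₗ δ.invmap) δ.invmap actM actN ∘ₗ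
        (D.comul.lTensor P ∘ₗ coactP).rTensor (M ⊗[k] N) ∘ₗ
          (TensorProduct.comm k (M ⊗[k] N) P).toLinearMap := by
  apply TensorProduct.ext_threefold
  intro m n p
  simp only [braiding, LinearMap.coe_comp, Function.comp_apply, LinearEquiv.coe_coe,
    TensorProduct.comm_tmul, LinearMap.rTensor_tmul]
  generalize coactP p = t
  induction t using TensorProduct.induction_on with
  | zero => simp
  | add t₁ t₂ h1 h2 => simp only [map_add, add_tmul, h1, h2]
  | tmul q h =>
    have hf : D.comul (γ.invmap (β.invmap (γ.lmap (δ.invmap h)))) =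
        TensorProduct.map (γ.invmap ∘ₗ β.invmap ∘ₗ γ.lmap ∘ₗ δ.invmap)
          (γ.invmap ∘ₗ β.invmap ∘ₗ γ.lmap ∘ₗ δ.invmap) (D.comul h) := by
      rw [comul_invmap_apply, comul_invmap_apply, comul_lmap_apply, comul_invmap_apply,
        ← LinearMap.comp_apply, ← TensorProduct.map_comp, ← LinearMap.comp_apply,
        ← TensorProduct.map_comp, ← LinearMap.comp_apply, ← TensorProduct.map_comp]
      rfl
    simp only [TensorProduct.assoc_tmul, LinearMap.lTensor_tmul, LinearMap.coe_comp,
      Function.comp_apply, LinearMap.rTensor_tmul, tensorAct, LinearEquiv.coe_coe, hf]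
    generalize D.comul h = u
    induction u using TensorProduct.induction_on with
    | zero => simp
    | add u₁ u₂ h1 h2 => simp only [map_add, add_tmul, tmul_add, h1, h2]
    | tmul a b =>
      simp [HopfQuasigroupAut.invmap, HopfQuasigroupAut.lmap]

lemma claimB {D : HopfQuasigroupData k H} {S : H →ₗ[k] H}
    (β γ δ : HopfQuasigroupAut D S)
    (actM : H ⊗[k] M →ₗ[k] M) (actN : H ⊗[k] N →ₗ[k] N) (coactP : P →ₗ[k] P ⊗[k] H) :
    (TensorProduct.assoc k P M N).toLinearMap ∘ₗ
        (braiding k M P β.invmap actM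
            ((γ.lmap ∘ₗ δ.invmap).lTensor P ∘ₗ coactP)).rTensor N ∘ₗ
          (TensorProduct.assoc k M P N).symm.toLinearMap ∘ₗ
            (braiding k N P δ.invmap actN coactP).lTensor M ∘ₗ
              (TensorProduct.assoc k M N P).toLinearMap =
      myOmega (β.invmap ∘ₗ γ.lmap ∘ₗ δ.invmap) δ.invmap actM actN ∘ₗ
        ((TensorProduct.assoc k P H H).toLinearMap ∘ₗ coactP.rTensor H ∘ₗ
            coactP).rTensor (M ⊗[k] N) ∘ₗ
          (TensorProduct.comm k (M ⊗[k] N) P).toLinearMap := by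
  apply TensorProduct.ext_threefold
  intro m n p
  simp only [braiding, LinearMap.coe_comp, Function.comp_apply, LinearEquiv.coe_coe,
    TensorProduct.comm_tmul, LinearMap.rTensor_tmul, TensorProduct.assoc_tmul,
    LinearMap.lTensor_tmul]
  generalize coactP p = t
  induction t using TensorProduct.induction_on with
  | zero => simp
  | add t₁ t₂ h1 h2 => simp only [map_add, add_tmul, tmul_add, h1, h2]
  | tmul q h =>
    simp only [TensorProduct.assoc_tmul, LinearMap.lTensor_tmul, LinearMap.coe_comp,
      Function.comp_apply, LinearMap.rTensor_tmul, LinearEquiv.coe_coe,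
      TensorProduct.comm_tmul, TensorProduct.assoc_symm_tmul]
    generalize coactP q = s
    induction s using TensorProduct.induction_on with
    | zero => simp
    | add s₁ s₂ h1 h2 => simp only [map_add, add_tmul, tmul_add, h1, h2]
    | tmul q' a =>
      simp [HopfQuasigroupAut.invmap, HopfQuasigroupAut.lmap]

/-- the hexagon identity
`c_{M⊗N,P} = (c_{M,ᴺP} ⊗ id_N) ∘ (id_M ⊗ c_{N,P})` (with the associativity constraints
of vector spaces inserted), where `c_{X,Y}(x ⊗ y) = y₀ ⊗ βₓ⁻¹(y₁)·x`, the tensor factor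
`M ⊗ N` carries its tensor Yetter–Drinfeld structure of type `(αγ, δγ⁻¹βγ)`, and `ᴺP`
is `P` with coaction `p ↦ p₀ ⊗ γδ⁻¹(p₁)`. -/
theorem braiding_hexagon (D : HopfQuasigroupData k H) (S : H →ₗ[k] H)
    (hS : D.IsAntipode S) (Sinv : H →ₗ[k] H) (hSinv₁ : S ∘ₗ Sinv = LinearMap.id)
    (hSinv₂ : Sinv ∘ₗ S = LinearMap.id)
    (α β γ δ μ ν : HopfQuasigroupAut D S)
    (actM : H ⊗[k] M →ₗ[k] M) (coactM : M →ₗ[k] M ⊗[k] H)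
    (actN : H ⊗[k] N →ₗ[k] N) (coactN : N →ₗ[k] N ⊗[k] H)
    (actP : H ⊗[k] P →ₗ[k] P) (coactP : P →ₗ[k] P ⊗[k] H)
    (hMq : IsQuasimodule D S actM) (hMc : IsComodule D coactM)
    (hMyd : YDCompat D Sinv α.lmap β.lmap actM coactM)
    (hNq : IsQuasimodule D S actN) (hNc : IsComodule D coactN)
    (hNyd : YDCompat D Sinv γ.lmap δ.lmap actN coactN)
    (hPq : IsQuasimodule D S actP) (hPc : IsComodule D coactP)
    (hPyd : YDCompat D Sinv μ.lmap ν.lmap actP coactP) :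
    braiding k (M ⊗[k] N) P (γ.invmap ∘ₗ β.invmap ∘ₗ γ.lmap ∘ₗ δ.invmap)
        (tensorAct D β.lmap γ.lmap γ.invmap actM actN) coactP =
      (TensorProduct.assoc k P M N).toLinearMap ∘ₗ
        (braiding k M P β.invmap actM
            ((γ.lmap ∘ₗ δ.invmap).lTensor P ∘ₗ coactP)).rTensor N ∘ₗ
          (TensorProduct.assoc k M P N).symm.toLinearMap ∘ₗ
            (braiding k N P δ.invmap actN coactP).lTensor M ∘ₗ
              (TensorProduct.assoc k M N P).toLinearMap := by
  have hco : (TensorProduct.assoc k P H H).toLinearMap ∘ₗ coactP.rTensor H ∘ₗ coactP =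
      D.comul.lTensor P ∘ₗ coactP := by
    rw [hPc.2]
    apply LinearMap.ext
    intro p
    simp
  rw [claimA β γ δ actM actN coactP, claimB β γ δ actM actN coactP, hco]

end Statement17
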